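/- The 3-dimensional complex algebra L³*₀₅ with basis e₁,e₂,e₃ and nonzero products e₁e₁ = e₂, e₂e₁ = e₃ is a nilpotent Novikov algebra, and its automorphism group consists exactly of the linear maps φ with matrix rows (x,0,0), (y,x²,0), (z,xy,x³) with x ≠ 0, in the basis e₁,e₂,e₃. -/

import Mathlib

/-- Span of the set of products of an element of `S` with an element of `T`. -/
def mulSpan {V : Type*} [AddCommGroup V] [Module ℂ V] (mul : V → V → V)
    (S T : Submodule ℂ V) : Submodule ℂ V :=
  Submodule.span ℂ {z | ∃ x ∈ S, ∃ y ∈ T, z = mul x y}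

/-- `piece mul n` is the span of all products of `n + 1` elements of the
algebra `(V, mul)`, with all possible bracketings. -/
def piece {V : Type*} [AddCommGroup V] [Module ℂ V] (mul : V → V → V) : ℕ → Submodule ℂ V
  | 0 => ⊤
  | n + 1 => ⨆ i : Fin (n + 1), mulSpan mul (piece mul i.1) (piece mul (n - i.1))

/-- An algebra is nilpotent if some power (with all bracketings) is zero. -/
def IsNilpotentMul {V : Type*} [AddCommGroup V] [Module ℂ V] (mul : V → V → V) : Prop :=
  ∃ n : ℕ, piece mul n = ⊥

/-- Multiplication of the algebra `L³*₀₅`: on the basis `e₁, e₂, e₃`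
(indexed `0,1,2`) the nonzero products are `e₁e₁ = e₂`, `e₂e₁ = e₃`. -/
def mulL305 (x y : Fin 3 → ℂ) : Fin 3 → ℂ :=
  ![0, x 0 * y 0, x 1 * y 0]

/-- The standard basis vector. -/
def e (i : Fin 3) : Fin 3 → ℂ := Pi.single i 1

/-!
Products satisfy `xy = x₁y₁ e₂ + x₂y₁ e₃`, so `(xy)z = x₁y₁z₁ e₃` and `x(yz) = 0`, from which both
Novikov identities are immediate. A product of an element whose first `i` coordinates vanish with
one whose first `j` coordinates vanish has its first `i + j + 1` coordinates vanishing, so all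
products of four elements are zero. An automorphism is determined by `φ(e₁) = xe₁ + ye₂ + ze₃`,
because `e₂ = e₁e₁` and `e₃ = e₂e₁`; conversely, for maps of this shape multiplicativity is a
direct check against the product formula, and `φ(e₃) = x³e₃` forces `x ≠ 0`.
-/

theorem piece_le_of_mul_mem {V : Type*} [AddCommGroup V] [Module ℂ V] {mul : V → V → V}
    {F : ℕ → Submodule ℂ V} (hF0 : F 0 = ⊤)
    (hF : ∀ i j (x y : V), x ∈ F i → y ∈ F j → mul x y ∈ F (i + j + 1)) (n : ℕ) :
    piece mul n ≤ F n := by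
  induction n using Nat.strong_induction_on with
  | _ n ih =>
    match n with
    | 0 => exact hF0 ▸ le_top
    | n + 1 =>
      rw [piece]
      refine iSup_le fun i => Submodule.span_le.mpr ?_
      rintro _ ⟨x, hx, y, hy, rfl⟩
      have hmem := hF _ _ x y (ih i (by omega) hx) (ih (n - i) (by omega) hy)
      rwa [show (i : ℕ) + (n - i) + 1 = n + 1 by omega] at hmem

theorem isNilpotentMul_of_mul_mem {V : Type*} [AddCommGroup V] [Module ℂ V] {mul : V → V → V}
    {F : ℕ → Submodule ℂ V} (hF0 : F 0 = ⊤)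
    (hF : ∀ i j (x y : V), x ∈ F i → y ∈ F j → mul x y ∈ F (i + j + 1)) {n : ℕ} (hn : F n = ⊥) :
    IsNilpotentMul mul :=
  ⟨n, eq_bot_iff.mpr (hn ▸ piece_le_of_mul_mem hF0 hF n)⟩

def coordFiltration (m n : ℕ) : Submodule ℂ (Fin m → ℂ) :=
  ⨅ (k : Fin m) (_ : (k : ℕ) < n), LinearMap.ker (LinearMap.proj k)

theorem mem_coordFiltration {m n : ℕ} {v : Fin m → ℂ} :
    v ∈ coordFiltration m n ↔ ∀ k : Fin m, (k : ℕ) < n → v k = 0 := by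
  simp [coordFiltration]

theorem coordFiltration_zero (m : ℕ) : coordFiltration m 0 = ⊤ :=
  eq_top_iff.mpr fun _ _ => mem_coordFiltration.mpr fun _ hk => absurd hk (Nat.not_lt_zero _)

theorem coordFiltration_self (m : ℕ) : coordFiltration m m = ⊥ :=
  eq_bot_iff.mpr fun _ hv => funext fun k => mem_coordFiltration.mp hv k k.isLt

theorem mulL305_eq (x y : Fin 3 → ℂ) : mulL305 x y = (x 0 * y 0) • e 1 + (x 1 * y 0) • e 2 := by
  funext i; fin_cases i <;> simp [mulL305, e]

theorem mulL305_apply_zero (x y : Fin 3 → ℂ) : mulL305 x y 0 = 0 := rfl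

theorem mulL305_eq_zero_of_apply_zero (x : Fin 3 → ℂ) {y : Fin 3 → ℂ} (hy : y 0 = 0) :
    mulL305 x y = 0 := by
  simp [mulL305_eq, hy]

theorem mulL305_mulL305 (x y z : Fin 3 → ℂ) : mulL305 (mulL305 x y) z = (x 0 * y 0 * z 0) • e 2 := by
  simp [mulL305_eq, e]

theorem mulL305_mem_coordFiltration {i j : ℕ} {x y : Fin 3 → ℂ} (hx : x ∈ coordFiltration 3 i)
    (hy : y ∈ coordFiltration 3 j) : mulL305 x y ∈ coordFiltration 3 (i + j + 1) := by
  rcases Nat.eq_zero_or_pos j with rfl | hj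
  · rw [mem_coordFiltration] at hx ⊢
    intro k hk
    fin_cases k
    · rfl
    · simp [mulL305, hx 0 (by simp at hk; omega)]
    · simp [mulL305, hx 1 (by simp at hk; omega)]
  · rw [mulL305_eq_zero_of_apply_zero x (mem_coordFiltration.mp hy 0 hj)]
    exact zero_mem _

theorem isNilpotentMul_mulL305 : IsNilpotentMul mulL305 :=
  isNilpotentMul_of_mul_mem (coordFiltration_zero 3)
    (fun _ _ _ _ => mulL305_mem_coordFiltration) (coordFiltration_self 3)

theorem eq_smul_e_add (v : Fin 3 → ℂ) : v = v 0 • e 0 + v 1 • e 1 + v 2 • e 2 := by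
  funext i; fin_cases i <;> simp [e]

theorem mulL305_e_zero_e_zero : mulL305 (e 0) (e 0) = e 1 := by
  simp [mulL305_eq, e]

theorem mulL305_e_one_e_zero : mulL305 (e 1) (e 0) = e 2 := by
  simp [mulL305_eq, e]

theorem LinearMap.map_mulL305_iff (f : (Fin 3 → ℂ) →ₗ[ℂ] (Fin 3 → ℂ)) :
    (∀ a b, f (mulL305 a b) = mulL305 (f a) (f b)) ↔
      ∃ x y z : ℂ, f (e 0) = x • e 0 + y • e 1 + z • e 2 ∧
        f (e 1) = x ^ 2 • e 1 + (x * y) • e 2 ∧ f (e 2) = x ^ 3 • e 2 := by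
  constructor
  · intro hf
    have he1 := hf (e 0) (e 0)
    rw [mulL305_e_zero_e_zero, mulL305_eq, ← sq, mul_comm (f (e 0) 1)] at he1
    have he2 := hf (e 1) (e 0)
    rw [mulL305_e_one_e_zero, mulL305_eq, he1] at he2
    refine ⟨_, _, _, eq_smul_e_add (f (e 0)), he1, he2.trans ?_⟩
    simp [e]
    ring
  · rintro ⟨x, y, z, he0, he1, he2⟩ a b
    have hf (v : Fin 3 → ℂ) : f v = v 0 • f (e 0) + v 1 • f (e 1) + v 2 • f (e 2) := by
      conv_lhs => rw [eq_smul_e_add v]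
      simp
    rw [hf, hf a, hf b, he0, he1, he2]
    funext i; fin_cases i <;> simp [mulL305, e] <;> ring

/-- `L³*₀₅` is a nilpotent Novikov algebra (left-symmetric and
right-commutative), and its automorphism group consists exactly of the
invertible linear maps with matrix rows `(x,0,0)`, `(y,x²,0)`, `(z,xy,x³)`,
`x ≠ 0`, i.e. `φ(e₁) = xe₁ + ye₂ + ze₃`, `φ(e₂) = x²e₂ + xye₃`,
`φ(e₃) = x³e₃`. -/
theorem L305_novikov_nilpotent_automorphisms :
    (∀ x y z : Fin 3 → ℂ,
      mulL305 (mulL305 x y) z - mulL305 x (mulL305 y z) =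
      mulL305 (mulL305 y x) z - mulL305 y (mulL305 x z)) ∧
    (∀ x y z : Fin 3 → ℂ, mulL305 (mulL305 x y) z = mulL305 (mulL305 x z) y) ∧
    IsNilpotentMul mulL305 ∧
    (∀ φ : (Fin 3 → ℂ) ≃ₗ[ℂ] (Fin 3 → ℂ),
      (∀ a b : Fin 3 → ℂ, φ (mulL305 a b) = mulL305 (φ a) (φ b)) ↔
      (∃ x y z : ℂ, x ≠ 0 ∧
        φ (e 0) = x • e 0 + y • e 1 + z • e 2 ∧
        φ (e 1) = x ^ 2 • e 1 + (x * y) • e 2 ∧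
        φ (e 2) = x ^ 3 • e 2)) := by
  refine ⟨fun x y z => ?_, fun x y z => ?_, isNilpotentMul_mulL305, fun φ => ?_⟩
  · simp only [mulL305_mulL305, mulL305_eq_zero_of_apply_zero _ (mulL305_apply_zero _ _)]
    rw [mul_comm (x 0)]
  · rw [mulL305_mulL305, mulL305_mulL305, mul_right_comm]
  · have hφ := LinearMap.map_mulL305_iff φ.toLinearMap
    simp only [LinearEquiv.coe_coe] at hφ
    rw [hφ]
    refine exists₃_congr fun x y z => ⟨fun h => ⟨?_, h⟩, fun h => h.2⟩
    rintro rfl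
    have he2 : φ (e 2) = φ 0 := by simp [h.2.2]
    simpa [e] using congrFun (φ.injective he2) 2
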